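/- arXiv:2101.09111 — 10 statements merged into one kernel-verified Lean document; each statement's English description precedes it below -/
import Mathlib

section
/- A non-connected interval graph is uniquely orderable if and only if it has at most two connected components, each of which is a complete graph. -/
open Set

variable {V : Type*}

/-- An interval representation of a graph `E` over a linear order `L`. -/
def IsIntervalRep {V : Type*} {L : Type} [LinearOrder L] (E : V → V → Prop)
    (fL fR : V → L) : Prop :=
  (∀ v, fL v ≤ fR v) ∧ ∀ u v, E u v ↔ (fL u ≤ fR v ∧ fL v ≤ fR u)

/-- `E` is a (reflexive, symmetric) interval graph. -/
def IsIntervalGraph {V : Type*} (E : V → V → Prop) : Prop :=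
  (∀ v, E v v) ∧ (∀ u v, E u v → E v u) ∧
    ∃ (L : Type) (_ : LinearOrder L) (fL fR : V → L), IsIntervalRep E fL fR

/-- `p 0, …, p n` is a path in `E`. -/
def IsPath {V : Type*} (E : V → V → Prop) (p : ℕ → V) (n : ℕ) : Prop :=
  ∀ i < n, E (p i) (p (i + 1))

/-- A minimal path: no chords. -/
def IsMinimalPath {V : Type*} (E : V → V → Prop) (p : ℕ → V) (n : ℕ) : Prop :=
  IsPath E p n ∧ ∀ i j, i + 1 < j → j ≤ n → ¬ E (p i) (p j)

/-- Two vertices are connected by a path. -/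
def Reach {V : Type*} (E : V → V → Prop) (u v : V) : Prop :=
  ∃ (n : ℕ) (p : ℕ → V), IsPath E p n ∧ p 0 = u ∧ p n = v

def Connected {V : Type*} (E : V → V → Prop) : Prop := ∀ u v, Reach E u v

/-- `r` is a strict partial order associated to the graph `E` (i.e. `E` is the
incomparability graph of `r`). -/
def IsAssociated {V : Type*} (E r : V → V → Prop) : Prop :=
  (∀ v, ¬ r v v) ∧ (∀ a b c, r a b → r b c → r a c) ∧
    ∀ u v, ¬ E u v ↔ (r u v ∨ r v u)

/-- `E` is uniquely orderable: it has an associated partial order, unique up to duality. -/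
def UniquelyOrderable {V : Type*} (E : V → V → Prop) : Prop :=
  ∃ r, IsAssociated E r ∧ ∀ r', IsAssociated E r' → r' = r ∨ r' = flip r

def Kset {V : Type*} (E : V → V → Prop) (B : Set V) : Set V := {v | ∀ b ∈ B, E v b}

def Rset {V : Type*} (E : V → V → Prop) (B : Set V) : Set V :=
  {v | v ∉ B ∧ v ∉ Kset E B}

/-- `B` is a buried subgraph of `E`. -/
def Buried {V : Type*} (E : V → V → Prop) (B : Set V) : Prop :=
  (∃ a ∈ B, ∃ b ∈ B, ¬ E a b) ∧ (∀ b ∈ B, b ∉ Kset E B) ∧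
    (Rset E B).Nonempty ∧ ∀ b ∈ B, ∀ r ∈ Rset E B, ¬ E b r

/-- The set `W` of non-adjacent ordered pairs. -/
def Wset {V : Type*} (E : V → V → Prop) : Set (V × V) := {p | ¬ E p.1 p.2}

/-- The relation `Q` on pairs. -/
def Qrel {V : Type*} (E : V → V → Prop) (p q : V × V) : Prop :=
  E p.1 q.1 ∧ E p.2 q.2

/-- `p` and `q` are connected by a `Q`-path inside `W`. -/
def QReach {V : Type*} (E : V → V → Prop) (p q : V × V) : Prop :=
  ∃ (n : ℕ) (c : ℕ → V × V), c 0 = p ∧ c n = q ∧ (∀ i ≤ n, c i ∈ Wset E) ∧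
    ∀ i < n, Qrel E (c i) (c (i + 1))

/-- The sets `B_n(v,u)` of the standard construction. -/
def Bfam {V : Type*} (E : V → V → Prop) (v u : V) : ℕ → Set V
  | 0 => {v, u}
  | n + 1 => {w | ∃ z ∈ Bfam E v u n, ∃ z' ∈ Bfam E v u n, E z w ∧ ¬ E z' w}

/-- `B(v,u) = ⋃ n, B_n(v,u)`. -/
def Bset {V : Type*} (E : V → V → Prop) (v u : V) : Set V := ⋃ n, Bfam E v u n

/-- The least `n` with `w ∈ B_n(v,u)`. -/
noncomputable def eLevel {V : Type*} (E : V → V → Prop) (v u w : V) : ℕ :=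
  sInf {n | w ∈ Bfam E v u n}

/-!
If `r` is associated to `E` and `U` is autonomous for `r` (each vertex outside `U` lies above all
of `U` or below all of `U`), reversing `r` inside `U` gives another associated order. It differs
from `r` once `U` contains two incomparable vertices, and from the dual of `r` once some vertex
outside `U` is incomparable to a vertex of `U`. Connected components are autonomous, which forces
components to be complete; then the down-set of any vertex is autonomous too, which excludes three
components. Conversely, with two complete components every associated order contains the order
"first component below the second" or its dual, and an associated order containing another
associated order equals it.
-/

open Relation

theorem reach_iff_reflTransGen {E : V → V → Prop} {u v : V} :
    Reach E u v ↔ ReflTransGen E u v := by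
  constructor
  · rintro ⟨n, p, hp, rfl, rfl⟩
    induction n with
    | zero => rfl
    | succ n ih => exact (ih fun i hi => hp i (by omega)).tail (hp n n.lt_succ_self)
  · intro h
    induction h with
    | refl => exact ⟨0, fun _ => u, fun i hi => absurd hi i.not_lt_zero, rfl, rfl⟩
    | @tail b c _ hbc ih =>
      obtain ⟨n, p, hp, hp0, hpn⟩ := ih
      refine ⟨n + 1, fun i => if i ≤ n then p i else c, fun i hi => ?_, by simp [hp0], by simp⟩
      rcases Nat.lt_succ_iff_lt_or_eq.1 hi with hi | rfl
      · simpa [hi.le, Nat.succ_le_of_lt hi] using hp i hi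
      · simpa [hpn] using hbc

section

variable {E r : V → V → Prop}

def reverseOn (U : Set V) (r : V → V → Prop) (u v : V) : Prop :=
  (u ∈ U ∧ v ∈ U ∧ r v u) ∨ (¬ (u ∈ U ∧ v ∈ U) ∧ r u v)

def IsAutonomous (r : V → V → Prop) (U : Set V) : Prop :=
  ∀ y ∉ U, (∀ x ∈ U, r x y) ∨ (∀ x ∈ U, r y x)

namespace IsAssociated

theorem irrefl (hr : IsAssociated E r) (u : V) : ¬ r u u := hr.1 u

theorem trans (hr : IsAssociated E r) {a b c : V} (hab : r a b) (hbc : r b c) : r a c :=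
  hr.2.1 a b c hab hbc

theorem asymm (hr : IsAssociated E r) {a b : V} (hab : r a b) : ¬ r b a :=
  fun hba => hr.irrefl a (hr.trans hab hba)

theorem not_adj_iff (hr : IsAssociated E r) {u v : V} : ¬ E u v ↔ r u v ∨ r v u :=
  hr.2.2 u v

theorem not_adj_of_rel (hr : IsAssociated E r) {u v : V} (h : r u v) : ¬ E u v :=
  hr.not_adj_iff.2 (.inl h)

theorem dual (hr : IsAssociated E r) : IsAssociated E (flip r) :=
  ⟨hr.1, fun _ _ _ hab hbc => hr.trans hbc hab, fun _ _ => hr.not_adj_iff.trans or_comm⟩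

theorem not_iff_swap_of_not_adj (hr : IsAssociated E r) {a b : V} (hab : ¬ E a b) :
    ¬ (r a b ↔ r b a) := by
  intro h
  rcases hr.not_adj_iff.1 hab with h' | h'
  · exact hr.asymm h' (h.1 h')
  · exact hr.asymm h' (h.2 h')

theorem rel_of_adj_left (hr : IsAssociated E r) {x x' y : V} (hxy : r x y) (hxx' : E x x')
    (hx'y : ¬ E x' y) : r x' y := by
  rcases hr.not_adj_iff.1 hx'y with h | h
  · exact h
  · exact absurd hxx' (hr.not_adj_of_rel (hr.trans hxy h))

theorem rel_of_reflTransGen (hr : IsAssociated E r) {x x' y : V}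
    (hy : ∀ w, ReflTransGen E x w → ¬ E w y) (hxy : r x y) (hxx' : ReflTransGen E x x') :
    r x' y := by
  induction hxx' with
  | refl => exact hxy
  | tail hxb hbc ih => exact hr.rel_of_adj_left ih hbc (hy _ (hxb.tail hbc))

theorem eq_of_le {r' : V → V → Prop} (hr : IsAssociated E r) (hr' : IsAssociated E r')
    (hle : ∀ a b, r a b → r' a b) : r' = r := by
  funext a b
  refine propext ⟨fun h => ?_, hle a b⟩
  rcases hr.not_adj_iff.1 (hr'.not_adj_of_rel h) with h' | h'
  · exact h'
  · exact absurd (hle b a h') (hr'.asymm h)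

theorem reverseOn (hr : IsAssociated E r) {U : Set V} (hU : IsAutonomous r U) :
    IsAssociated E (reverseOn U r) := by
  refine ⟨fun v => ?_, fun a b c hab hbc => ?_, fun u v => ?_⟩
  · simp [_root_.reverseOn, hr.irrefl v]
  · simp only [_root_.reverseOn] at *
    grind [hr.trans, hr.irrefl, hU a, hU b, hU c]
  · simp only [_root_.reverseOn, hr.not_adj_iff]
    tauto

theorem exists_ne_of_isAutonomous (hr : IsAssociated E r) {U : Set V} (hU : IsAutonomous r U)
    {s t z : V} (hs : s ∈ U) (ht : t ∈ U) (hst : ¬ E s t) (hz : z ∉ U) (hsz : ¬ E s z) :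
    ∃ r', IsAssociated E r' ∧ r' ≠ r ∧ r' ≠ flip r := by
  refine ⟨_root_.reverseOn U r, hr.reverseOn hU, fun h => ?_, fun h => ?_⟩
  · refine hr.not_iff_swap_of_not_adj hst (Iff.symm ?_)
    simpa [_root_.reverseOn, hs, ht] using congrFun (congrFun h s) t
  · refine hr.not_iff_swap_of_not_adj hsz ?_
    simpa [_root_.reverseOn, hz, flip] using congrFun (congrFun h s) z

theorem isAutonomous_component (hr : IsAssociated E r) (a : V) :
    IsAutonomous r {x | ReflTransGen E a x} := by
  intro y hy
  have hfar : ∀ w, ReflTransGen E a w → ¬ E w y := fun w haw hE => hy (haw.tail hE)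
  rcases hr.not_adj_iff.1 (hfar a .refl) with h | h
  · exact .inl fun x hx => hr.rel_of_reflTransGen hfar h hx
  · exact .inr fun x hx => hr.dual.rel_of_reflTransGen hfar h hx

theorem isAutonomous_setOf_rel (hr : IsAssociated E r) {z : V}
    (hz : ∀ x y, r x z → E x y → r y z) : IsAutonomous r {x | r x z} := by
  refine fun y hy => .inl fun x hx => ?_
  rcases hr.not_adj_iff.1 fun hxy => hy (hz x y hx hxy) with h | h
  · exact h
  · exact absurd (hr.trans h hx) hy

theorem exists_two_lt (hr : IsAssociated E r) {u v w : V} (huv : ¬ E u v) (huw : ¬ E u w)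
    (hvw : ¬ E v w) : ∃ s t z, r s z ∧ r t z ∧ ¬ E s t := by
  rcases hr.not_adj_iff.1 huv with h1 | h1 <;> rcases hr.not_adj_iff.1 huw with h2 | h2 <;>
    rcases hr.not_adj_iff.1 hvw with h3 | h3
  all_goals first
    | exact ⟨u, v, w, h2, h3, huv⟩
    | exact ⟨u, w, v, h1, h3, huw⟩
    | exact ⟨v, w, u, h1, h2, hvw⟩
    | exact absurd (hr.trans (hr.trans h1 h3) h2) (hr.irrefl u)
    | exact absurd (hr.trans (hr.trans h1 h2) h3) (hr.irrefl v)

end IsAssociated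

namespace UniquelyOrderable

theorem adj_of_reflTransGen [Std.Symm E] (hE : UniquelyOrderable E) {u₀ v₀ : V}
    (h₀ : ¬ ReflTransGen E u₀ v₀) {a a' : V} (haa' : ReflTransGen E a a') : E a a' := by
  obtain ⟨r, hr, huniq⟩ := hE
  by_contra hne
  obtain ⟨b, hb⟩ : ∃ b, ¬ ReflTransGen E a b := by
    by_contra! hall
    exact h₀ ((symm (hall u₀)).trans (hall v₀))
  obtain ⟨r', hr', hr'r, hr'f⟩ := hr.exists_ne_of_isAutonomous (hr.isAutonomous_component a)
    .refl haa' hne hb fun h => hb (.single h)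
  rcases huniq r' hr' with h | h <;> contradiction

theorem reflTransGen_among_three (hE : UniquelyOrderable E)
    (hcomplete : ∀ u v, ReflTransGen E u v → E u v) (u v w : V) :
    ReflTransGen E u v ∨ ReflTransGen E u w ∨ ReflTransGen E v w := by
  obtain ⟨r, hr, huniq⟩ := hE
  by_contra! ⟨huv, huw, hvw⟩
  obtain ⟨s, t, z, hsz, htz, hst⟩ :=
    hr.exists_two_lt (fun h => huv (.single h)) (fun h => huw (.single h)) fun h => hvw (.single h)
  have hclosed : ∀ x y, r x z → E x y → r y z := fun x y hxz hxy =>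
    hr.rel_of_adj_left hxz hxy fun hyz =>
      hr.not_adj_of_rel hxz (hcomplete x z ((ReflTransGen.single hxy).tail hyz))
  obtain ⟨r', hr', hr'r, hr'f⟩ := hr.exists_ne_of_isAutonomous
    (hr.isAutonomous_setOf_rel hclosed) hsz htz hst (hr.irrefl z) (hr.not_adj_of_rel hsz)
  rcases huniq r' hr' with h | h <;> contradiction

end UniquelyOrderable

def componentOrder (E : V → V → Prop) (u₀ v₀ a b : V) : Prop :=
  ReflTransGen E a u₀ ∧ ReflTransGen E b v₀

theorem isAssociated_componentOrder [Std.Symm E] (hcomplete : ∀ u v, ReflTransGen E u v → E u v)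
    (htwo : ∀ u v w, ReflTransGen E u v ∨ ReflTransGen E u w ∨ ReflTransGen E v w) {u₀ v₀ : V}
    (h₀ : ¬ ReflTransGen E u₀ v₀) : IsAssociated E (componentOrder E u₀ v₀) := by
  refine ⟨fun a ⟨ha, hb⟩ => h₀ ((symm ha).trans hb), fun a b c ⟨ha, _⟩ ⟨_, hc⟩ => ⟨ha, hc⟩,
    fun a b => ⟨fun hab => ?_, ?_⟩⟩
  · have hside : ∀ x, ReflTransGen E x u₀ ∨ ReflTransGen E x v₀ := fun x =>
      (htwo x u₀ v₀).imp_right fun h => h.resolve_right h₀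
    have hab' : ¬ ReflTransGen E a b := fun h => hab (hcomplete a b h)
    rcases hside a with ha | ha <;> rcases hside b with hb | hb
    · exact absurd (ha.trans (symm hb)) hab'
    · exact .inl ⟨ha, hb⟩
    · exact .inr ⟨hb, ha⟩
    · exact absurd (ha.trans (symm hb)) hab'
  · rintro (⟨ha, hb⟩ | ⟨hb, ha⟩) hE
    · exact h₀ ((symm ha).trans ((ReflTransGen.single hE).trans hb))
    · exact h₀ ((symm hb).trans ((ReflTransGen.single (symm hE)).trans ha))

theorem componentOrder_le [Std.Symm E] (hcomplete : ∀ u v, ReflTransGen E u v → E u v)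
    {u₀ v₀ : V} (hco : IsAssociated E (componentOrder E u₀ v₀)) {r' : V → V → Prop}
    (hr' : IsAssociated E r') (h : r' u₀ v₀) (a b : V) :
    componentOrder E u₀ v₀ a b → r' a b := by
  rintro ⟨ha, hb⟩
  have hu₀b : r' u₀ b := hr'.dual.rel_of_adj_left h (hcomplete _ _ (symm hb))
    (hco.not_adj_iff.2 (.inr ⟨.refl, hb⟩))
  exact hr'.rel_of_adj_left hu₀b (hcomplete _ _ (symm ha)) (hco.not_adj_of_rel ⟨ha, hb⟩)

theorem uniquelyOrderable_of_two_complete_components [Std.Symm E]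
    (hcomplete : ∀ u v, ReflTransGen E u v → E u v)
    (htwo : ∀ u v w, ReflTransGen E u v ∨ ReflTransGen E u w ∨ ReflTransGen E v w) {u₀ v₀ : V}
    (h₀ : ¬ ReflTransGen E u₀ v₀) : UniquelyOrderable E := by
  have hco := isAssociated_componentOrder hcomplete htwo h₀
  have hco' := isAssociated_componentOrder hcomplete htwo fun h => h₀ (symm h)
  have hswap : componentOrder E v₀ u₀ = flip (componentOrder E u₀ v₀) := by
    funext a b
    exact propext and_comm
  refine ⟨_, hco, fun r' hr' => ?_⟩
  rcases hr'.not_adj_iff.1 fun h => h₀ (.single h) with h | h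
  · exact .inl (hco.eq_of_le hr' (componentOrder_le hcomplete hco hr' h))
  · exact .inr (hswap ▸ hco'.eq_of_le hr' (componentOrder_le hcomplete hco' hr' h))

end

/-- A non-connected interval graph is uniquely orderable iff it has
at most two connected components, each of which is complete. -/
theorem stmt0 {V : Type*} (E : V → V → Prop) (hIG : IsIntervalGraph E)
    (hnc : ∃ u v : V, ¬ Reach E u v) :
    UniquelyOrderable E ↔
      ((∀ u v, Reach E u v → E u v) ∧
        ∀ u v w : V, Reach E u v ∨ Reach E u w ∨ Reach E v w) := by
  have : Std.Symm E := ⟨hIG.2.1⟩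
  simp only [reach_iff_reflTransGen] at hnc ⊢
  obtain ⟨u₀, v₀, h₀⟩ := hnc
  refine ⟨fun hE => ?_, fun ⟨hcomplete, htwo⟩ =>
    uniquelyOrderable_of_two_complete_components hcomplete htwo h₀⟩
  have hcomplete : ∀ u v, ReflTransGen E u v → E u v := fun _ _ => hE.adj_of_reflTransGen h₀
  exact ⟨hcomplete, hE.reflTransGen_among_three hcomplete⟩
end

section
/- Let (V,E) be an interval graph with representation F (mapping vertices to intervals of a linear order L). If v_0 E v_1 E ... E v_n is a path and w ∈ V satisfies F(w) ⊀ F(v_0) and F(v_n) ⊀ F(w) (where F(x) < F(y) means the interval F(x) lies entirely before F(y)), then there exists i ≤ n with v_i E w. -/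
open Set

variable {V : Type*}

namespace IsIntervalRep

variable {L : Type} [LinearOrder L] {E : V → V → Prop} {fL fR : V → L}

theorem adj_iff_not_lt (hrep : IsIntervalRep E fL fR) (u v : V) :
    E u v ↔ ¬ fR v < fL u ∧ ¬ fR u < fL v := by
  simp only [hrep.2 u v, not_lt]

theorem adj_of_adj_of_lt (hrep : IsIntervalRep E fL fR) {u v w : V} (huv : E u v)
    (hu : fR u < fL w) (hv : ¬ fR v < fL w) : E v w :=
  (hrep.adj_iff_not_lt v w).2
    ⟨((hrep.2 u v).1 huv).2.trans_lt (hu.trans_le (hrep.1 w)) |>.not_gt, hv⟩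

end IsIntervalRep

theorem IsPath.of_succ {E : V → V → Prop} {p : ℕ → V} {n : ℕ}
    (hp : IsPath E p (n + 1)) : IsPath E p n :=
  fun i hi => hp i (Nat.lt_succ_of_lt hi)

theorem stmt1 {V : Type*} {L : Type} [LinearOrder L] (E : V → V → Prop)
    (fL fR : V → L) (hrep : IsIntervalRep E fL fR)
    (p : ℕ → V) (n : ℕ) (hp : IsPath E p n) (w : V)
    (h0 : ¬ fR w < fL (p 0)) (hn : ¬ fR (p n) < fL w) :
    ∃ i ≤ n, E (p i) w := by
  induction n with
  | zero => exact ⟨0, le_rfl, (hrep.adj_iff_not_lt _ _).2 ⟨h0, hn⟩⟩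
  | succ n ih =>
    by_cases hlt : fR (p n) < fL w
    · exact ⟨n + 1, le_rfl, hrep.adj_of_adj_of_lt (hp n n.lt_succ_self) hlt hn⟩
    · obtain ⟨i, hi, hiw⟩ := ih hp.of_succ hlt
      exact ⟨i, hi.trans n.le_succ, hiw⟩
end

section
/- Let (V,E) be an interval graph with representation (L,<,f_L,f_R) and let v_0 E ... E v_n be a minimal path with F(v_0) < F(v_n). Then f_R(v_i) < f_R(v_{i+1}) for each i < n−1, and f_L(v_j) < f_L(v_{j+1}) for each j with 0 < j < n. -/
open Set

variable {V : Type*}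

/-!
Write `a i = fL (p i)` and `b i = fR (p i)`. Minimality forbids the chord `p i — p (i + 2)`, so
either `b i < a (i + 2)` (the path moves right at `i`) or `b (i + 2) < a i` (it moves left).
The intervals of three consecutive vertices overlap in such a way that the direction cannot
change along the path, and moving left all the way would end with `b n < a 0`, contradicting
`b 0 < a n`. Moving right at every `i` gives both monotonicity statements at once, since
`a (i + 1) ≤ b i` and `a (i + 2) ≤ b (i + 1)`.
-/

namespace IsIntervalRep

variable {L : Type} [LinearOrder L] {E : V → V → Prop} {fL fR : V → L}

theorem dual (hrep : IsIntervalRep E fL fR) :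
    IsIntervalRep (L := Lᵒᵈ) E (OrderDual.toDual ∘ fR) (OrderDual.toDual ∘ fL) :=
  ⟨fun v => hrep.1 v, fun u v => (hrep.2 u v).trans and_comm⟩

theorem lt_or_lt_of_not_adj (hrep : IsIntervalRep E fL fR) {u v : V} (huv : ¬ E u v) :
    fR u < fL v ∨ fR v < fL u := by
  rw [hrep.2, not_and_or, not_le, not_le] at huv
  exact huv.symm

end IsIntervalRep

theorem IsPath.fL_le_fR_of_lt {L : Type} [LinearOrder L] {E : V → V → Prop} {fL fR : V → L}
    {p : ℕ → V} {n : ℕ} (hp : IsPath E p n) (hrep : IsIntervalRep E fL fR) {i : ℕ}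
    (hi : i < n) : fL (p i) ≤ fR (p (i + 1)) ∧ fL (p (i + 1)) ≤ fR (p i) :=
  (hrep.2 _ _).1 (hp i hi)

namespace IsMinimalPath

variable {L : Type} [LinearOrder L] {E : V → V → Prop} {fL fR : V → L}
  {p : ℕ → V} {n : ℕ}

theorem lt_or_lt (hp : IsMinimalPath E p n) (hrep : IsIntervalRep E fL fR) {i : ℕ}
    (hi : i + 2 ≤ n) : fR (p i) < fL (p (i + 2)) ∨ fR (p (i + 2)) < fL (p i) :=
  hrep.lt_or_lt_of_not_adj (hp.2 i (i + 2) (by omega) hi)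

theorem fR_lt_fL_succ_of_fR_lt_fL (hp : IsMinimalPath E p n) (hrep : IsIntervalRep E fL fR)
    {i : ℕ} (hi : i + 3 ≤ n) (h : fR (p i) < fL (p (i + 2))) :
    fR (p (i + 1)) < fL (p (i + 3)) := by
  refine (hp.lt_or_lt hrep hi).resolve_right fun h' => lt_irrefl (fR (p i)) ?_
  calc fR (p i) < fL (p (i + 2)) := h
    _ ≤ fR (p (i + 3)) := (hp.1.fL_le_fR_of_lt hrep (i := i + 2) (by omega)).1
    _ < fL (p (i + 1)) := h'
    _ ≤ fR (p i) := (hp.1.fL_le_fR_of_lt hrep (i := i) (by omega)).2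

theorem fR_lt_fL_of_fR_zero_lt_fL_two (hp : IsMinimalPath E p n)
    (hrep : IsIntervalRep E fL fR) (h₀ : fR (p 0) < fL (p 2)) :
    ∀ i, i + 2 ≤ n → fR (p i) < fL (p (i + 2))
  | 0, _ => h₀
  | i + 1, hi => hp.fR_lt_fL_succ_of_fR_lt_fL hrep hi
      (hp.fR_lt_fL_of_fR_zero_lt_fL_two hrep h₀ i (by omega))

theorem fR_zero_lt_fL_of_fR_zero_lt_fL_two (hp : IsMinimalPath E p n)
    (hrep : IsIntervalRep E fL fR) (h₀ : fR (p 0) < fL (p 2)) :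
    ∀ j, j + 2 ≤ n → fR (p 0) < fL (p (j + 2))
  | 0, _ => h₀
  | j + 1, hj => calc
      fR (p 0) < fL (p (j + 2)) := hp.fR_zero_lt_fL_of_fR_zero_lt_fL_two hrep h₀ j (by omega)
      _ ≤ fR (p (j + 1)) := (hp.1.fL_le_fR_of_lt hrep (i := j + 1) (by omega)).2
      _ < fL (p (j + 3)) := hp.fR_lt_fL_of_fR_zero_lt_fL_two hrep h₀ (j + 1) hj

/-- Moving left at `0` is excluded by running the argument in the order dual, where it forces
`fR (p n) < fL (p 0)`. -/
theorem fR_zero_lt_fL_two (hp : IsMinimalPath E p n) (hrep : IsIntervalRep E fL fR)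
    (hn : 2 ≤ n) (hfirst : fR (p 0) < fL (p n)) : fR (p 0) < fL (p 2) := by
  refine (hp.lt_or_lt hrep (i := 0) hn).resolve_right fun hleft => lt_irrefl (fL (p 0)) ?_
  have hlast : fR (p n) < fL (p 0) := by
    obtain ⟨j, rfl⟩ : ∃ j, n = j + 2 := ⟨n - 2, by omega⟩
    exact hp.fR_zero_lt_fL_of_fR_zero_lt_fL_two hrep.dual hleft j le_rfl
  calc fL (p 0) ≤ fR (p 0) := hrep.1 _
    _ < fL (p n) := hfirst
    _ ≤ fR (p n) := hrep.1 _
    _ < fL (p 0) := hlast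

end IsMinimalPath

theorem stmt3 {V : Type*} {L : Type} [LinearOrder L] (E : V → V → Prop)
    (fL fR : V → L) (hrep : IsIntervalRep E fL fR)
    (p : ℕ → V) (n : ℕ) (hp : IsMinimalPath E p n)
    (hfirst : fR (p 0) < fL (p n)) :
    (∀ i, i < n - 1 → fR (p i) < fR (p (i + 1))) ∧
      ∀ j, 0 < j → j < n → fL (p j) < fL (p (j + 1)) := by
  by_cases hn : n < 2
  · exact ⟨fun i hi => by omega, fun j hj hjn => by omega⟩
  have hright := hp.fR_lt_fL_of_fR_zero_lt_fL_two hrep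
    (hp.fR_zero_lt_fL_two hrep (by omega) hfirst)
  refine ⟨fun i hi => ?_, fun j hj hjn => ?_⟩
  · exact (hright i (by omega)).trans_le (hp.1.fL_le_fR_of_lt hrep (i := i + 1) (by omega)).2
  · obtain ⟨i, rfl⟩ : ∃ i, j = i + 1 := ⟨j - 1, by omega⟩
    exact (hp.1.fL_le_fR_of_lt hrep (i := i) (by omega)).2.trans_lt (hright i (by omega))
end

section
/- Let (V,E) be an interval graph with representation (L,<,f_L,f_R), let v_0 E ... E v_n be a minimal path with F(v_0) < F(v_n), and let v ∈ V with F(v) < F(v_0). Then ¬(v_i E v) for every i ≠ 1. -/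
open Set

variable {V : Type*}

/-! The intervals of `p i, …, p n` cover `[fL (p i), fR (p n)]`. For `i ≥ 2` this segment contains
`fR (p 0)`, because `fL (p i) ≤ fR v < fL (p 0)`; an interval `p j` containing `fR (p 0)` gives
the chord `p 0 E p j`. -/

namespace IsIntervalRep

variable {L : Type} [LinearOrder L] {E : V → V → Prop} {fL fR : V → L}

theorem adj_of_mem_of_mem (hrep : IsIntervalRep E fL fR) {u w : V} {x : L}
    (hu : fL u ≤ x ∧ x ≤ fR u) (hw : fL w ≤ x ∧ x ≤ fR w) : E u w :=
  (hrep.2 u w).2 ⟨hu.1.trans hw.2, hw.1.trans hu.2⟩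

theorem exists_mem_of_isPath (hrep : IsIntervalRep E fL fR) {p : ℕ → V} {n i m : ℕ}
    (hp : IsPath E p n) (him : i ≤ m) (hmn : m ≤ n) {x : L}
    (hix : fL (p i) ≤ x) (hxm : x ≤ fR (p m)) :
    ∃ j, i ≤ j ∧ j ≤ m ∧ fL (p j) ≤ x ∧ x ≤ fR (p j) := by
  induction m, him using Nat.le_induction with
  | base => exact ⟨i, le_rfl, le_rfl, hix, hxm⟩
  | succ m him ih =>
    by_cases hxm' : x ≤ fR (p m)
    · obtain ⟨j, hij, hjm, hj⟩ := ih (by omega) hxm'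
      exact ⟨j, hij, by omega, hj⟩
    · have hstep : fL (p (m + 1)) ≤ fR (p m) := ((hrep.2 _ _).1 (hp m (by omega))).2
      exact ⟨m + 1, by omega, le_rfl, hstep.trans (not_le.1 hxm').le, hxm⟩

end IsIntervalRep

theorem stmt4 {V : Type*} {L : Type} [LinearOrder L] (E : V → V → Prop)
    (fL fR : V → L) (hrep : IsIntervalRep E fL fR)
    (p : ℕ → V) (n : ℕ) (hp : IsMinimalPath E p n)
    (hfirst : fR (p 0) < fL (p n)) (v : V) (hv : fR v < fL (p 0)) :
    ∀ i ≤ n, i ≠ 1 → ¬ E (p i) v := by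
  intro i hin hi1 hE
  have hiv : fL (p i) ≤ fR v := ((hrep.2 _ _).1 hE).1
  obtain rfl | hi2 : i = 0 ∨ 2 ≤ i := by omega
  · exact hv.not_ge hiv
  · obtain ⟨j, hij, hjn, hj⟩ := hrep.exists_mem_of_isPath hp.1 hin le_rfl (x := fR (p 0))
      (hiv.trans (hv.trans_le (hrep.1 _)).le) (hfirst.trans_le (hrep.1 _)).le
    exact hp.2 0 j (by omega) hjn (hrep.adj_of_mem_of_mem ⟨hrep.1 _, le_rfl⟩ hj)
end

section
/- Let (V,E) be an interval graph (possibly infinite) and ≺ a partial order associated to (V,E). Define W = {(a,b) ∈ V × V : ¬(a E b)} and (a,b) Q (c,d) iff a E c and b E d. If (a,b), (c,d) ∈ W are connected by a Q-path in (W,Q) and a ≺ b, then c ≺ d. -/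
/-!
Along a `Q`-step from `(p₁, p₂)` with `p₁ ≺ p₂` to `(q₁, q₂)` with `q₂ ≺ q₁`, transitivity of `≺`
forces `p₁ E q₂` and `p₂ E q₁`, so `p₁ q₁ p₂ q₂` is an induced 4-cycle. Interval graphs have none,
so each `Q`-step inside `W` keeps the orientation, and hence so does every `Q`-path.
-/

open Set

variable {V : Type*}

section

variable {E r : V → V → Prop}

def NoInducedC4 (E : V → V → Prop) : Prop :=
  ∀ a b c d, E a b → E b c → E c d → E d a → ¬ E a c → E b d

theorem IsIntervalRep.noInducedC4 {L : Type} [LinearOrder L] {fL fR : V → L}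
    (hrep : IsIntervalRep E fL fR) : NoInducedC4 E := by
  intro a b c d hab hbc hcd hda hac
  rw [hrep.2] at hab hbc hcd hda hac ⊢
  rcases not_and_or.mp hac with h | h <;> rw [not_le] at h
  · exact ⟨hbc.1.trans (h.le.trans hda.2), hcd.2.trans (h.le.trans hab.1)⟩
  · exact ⟨hab.2.trans (h.le.trans hcd.1), hda.1.trans (h.le.trans hbc.2)⟩

theorem IsIntervalGraph.noInducedC4 (hE : IsIntervalGraph E) :
    NoInducedC4 E := by
  obtain ⟨-, -, L, _, fL, fR, hrep⟩ := hE
  exact hrep.noInducedC4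

theorem IsAssociated.adj_of_rel_of_rel (hr : IsAssociated E r) {a b c d : V}
    (hab : r a b) (hdc : r d c) (hac : E a c) (hbd : E b d) : E a d ∧ E b c := by
  obtain ⟨-, htrans, hnadj⟩ := hr
  constructor
  · by_contra had
    rcases (hnadj a d).mp had with h | h
    · exact (hnadj a c).mpr (Or.inl (htrans _ _ _ h hdc)) hac
    · exact (hnadj b d).mpr (Or.inr (htrans _ _ _ h hab)) hbd
  · by_contra hbc
    rcases (hnadj b c).mp hbc with h | h
    · exact (hnadj a c).mpr (Or.inl (htrans _ _ _ hab h)) hac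
    · exact (hnadj b d).mpr (Or.inr (htrans _ _ _ hdc h)) hbd

theorem IsAssociated.symm (hr : IsAssociated E r) {a b : V} (hab : E a b) : E b a := by
  by_contra hba
  exact ((hr.2.2 a b).mpr ((hr.2.2 b a).mp hba).symm) hab

theorem IsAssociated.rel_of_qrel (hr : IsAssociated E r) (hE : NoInducedC4 E) {p q : V × V}
    (hq : q ∈ Wset E) (hpq : Qrel E p q) (hp : r p.1 p.2) : r q.1 q.2 := by
  refine ((hr.2.2 q.1 q.2).mp hq).resolve_right fun hq' => hq ?_
  obtain ⟨hp₁q₂, hp₂q₁⟩ := hr.adj_of_rel_of_rel hp hq' hpq.1 hpq.2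
  exact hE _ _ _ _ hpq.1 (hr.symm hp₂q₁) hpq.2 (hr.symm hp₁q₂) ((hr.2.2 _ _).mpr (Or.inl hp))

theorem QReach.induction {P : V × V → Prop} {p q : V × V}
    (hpq : QReach E p q) (hstep : ∀ x y, y ∈ Wset E → Qrel E x y → P x → P y) (hp : P p) :
    P q := by
  obtain ⟨n, c, rfl, rfl, hW, hQ⟩ := hpq
  suffices ∀ i ≤ n, P (c i) from this n le_rfl
  intro i
  induction i with
  | zero => exact fun _ => hp
  | succ i ih => exact fun hi => hstep _ _ (hW _ hi) (hQ i hi) (ih (Nat.le_of_succ_le hi))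

end

theorem stmt5 {V : Type*} (E : V → V → Prop) (hIG : IsIntervalGraph E)
    (r : V → V → Prop) (hr : IsAssociated E r) (a b c d : V)
    (hQ : QReach E (a, b) (c, d)) (hab : r a b) : r c d :=
  hQ.induction (P := fun x => r x.1 x.2)
    (fun _ _ hy hxy => hr.rel_of_qrel hIG.noInducedC4 hy hxy) hab
end

section
/- Let (V,E) be an interval graph, ≺ an associated partial order, and W, Q as defined. Then for no (a,b) ∈ W is (a,b) connected to (b,a) by a Q-path in (W,Q). Consequently, if (V,E) is not complete, the graph (W,Q) has at least two connected components. -/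
open Set

variable {V : Type*}

/-!
A pair `(a, b)` of disjoint intervals has one interval to the left of the other. Along a
`Q`-step `(a, b) → (c, d)` in `W` this orientation is kept: if `c` lay to the right of `d`,
then `d` ends before `c` starts, while `c` meets `a`, `a` lies left of `b`, and `b` meets `d`.
So `(a, b)` and `(b, a)`, which have opposite orientations, are never `Q`-connected.
-/

theorem QReach.rec_invariant {E : V → V → Prop} {P : V × V → Prop}
    (hP : ∀ p q, q ∈ Wset E → Qrel E p q → P p → P q) {p q : V × V}
    (hpq : QReach E p q) (hp : P p) : P q := by
  obtain ⟨n, c, rfl, rfl, hW, hQ⟩ := hpq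
  suffices ∀ i ≤ n, P (c i) from this n le_rfl
  intro i
  induction i with
  | zero => exact fun _ => hp
  | succ i ih => exact fun hi => hP _ _ (hW _ hi) (hQ i hi) (ih (by omega))

theorem QReach.swap {E : V → V → Prop} (hE : ∀ u v, E u v → E v u) {p q : V × V}
    (hpq : QReach E p q) : QReach E p.swap q.swap := by
  obtain ⟨n, c, rfl, rfl, hW, hQ⟩ := hpq
  exact ⟨n, fun i => (c i).swap, rfl, rfl, fun i hi h => hW i hi (hE _ _ h),
    fun i hi => (hQ i hi).symm⟩

namespace IsIntervalRep

variable {L : Type} [LinearOrder L] {E : V → V → Prop} {fL fR : V → L}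

theorem symm (h : IsIntervalRep E fL fR) (u v : V) (huv : E u v) : E v u := by
  rw [h.2] at huv ⊢
  exact huv.symm

theorem not_adj_iff (h : IsIntervalRep E fL fR) {u v : V} :
    ¬ E u v ↔ fR u < fL v ∨ fR v < fL u := by
  rw [h.2, not_and_or, not_le, not_le, or_comm]

theorem lt_of_adj_of_adj (h : IsIntervalRep E fL fR) {a b c d : V} (hab : fR a < fL b)
    (hcd : ¬ E c d) (hac : E a c) (hbd : E b d) : fR c < fL d := by
  refine ((h.not_adj_iff).1 hcd).resolve_right fun hdc => ?_
  have hca : fL c ≤ fR a := ((h.2 a c).1 hac).2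
  have hbd : fL b ≤ fR d := ((h.2 b d).1 hbd).1
  exact lt_irrefl _ (((hdc.trans_le hca).trans hab).trans_le hbd)

theorem lt_of_qReach (h : IsIntervalRep E fL fR) {p q : V × V} (hpq : QReach E p q)
    (hp : fR p.1 < fL p.2) : fR q.1 < fL q.2 :=
  hpq.rec_invariant (fun _ _ hq hQ hp => h.lt_of_adj_of_adj hp hq hQ.1 hQ.2) hp

theorem not_qReach_swap_of_lt (h : IsIntervalRep E fL fR) {a b : V} (hab : fR a < fL b) :
    ¬ QReach E (a, b) (b, a) := fun hpq =>
  have hba : fR b < fL a := h.lt_of_qReach hpq hab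
  lt_irrefl _ ((((h.1 a).trans_lt hab).trans_le (h.1 b)).trans hba)

theorem not_qReach_swap (h : IsIntervalRep E fL fR) {a b : V} (hab : ¬ E a b) :
    ¬ QReach E (a, b) (b, a) := by
  rcases (h.not_adj_iff).1 hab with hab | hba
  · exact h.not_qReach_swap_of_lt hab
  · exact fun hpq => h.not_qReach_swap_of_lt hba (hpq.swap h.symm)

end IsIntervalRep

theorem stmt6_general {V : Type*} (E : V → V → Prop) (hIG : IsIntervalGraph E) :
    (∀ a b : V, ¬ E a b → ¬ QReach E (a, b) (b, a)) ∧
      ((∃ a b : V, ¬ E a b) →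
        ∃ p q : V × V, p ∈ Wset E ∧ q ∈ Wset E ∧ ¬ QReach E p q) := by
  obtain ⟨-, -, L, _, fL, fR, hrep⟩ := hIG
  refine ⟨fun a b => hrep.not_qReach_swap, fun ⟨a, b, hab⟩ => ?_⟩
  exact ⟨(a, b), (b, a), hab, fun hba => hab (hrep.symm _ _ hba), hrep.not_qReach_swap hab⟩

theorem stmt6 {V : Type*} (E : V → V → Prop) (hIG : IsIntervalGraph E)
    (r : V → V → Prop) (hr : IsAssociated E r) :
    (∀ a b : V, ¬ E a b → ¬ QReach E (a, b) (b, a)) ∧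
      ((∃ a b : V, ¬ E a b) →
        ∃ p q : V × V, p ∈ Wset E ∧ q ∈ Wset E ∧ ¬ QReach E p q) :=
  stmt6_general E hIG
end

section
/- Let (V,E) be a graph with a buried subgraph B, ≺₀ a partial order associated to (V,E), and b₀ ∈ B. Define ≺ by: for u,v both in B or both not in B, u ≺ v iff u ≺₀ v; for b ∈ B and v ∉ B, b ≺ v iff b₀ ≺₀ v, and v ≺ b iff v ≺₀ b₀. Then ≺ is a partial order associated to (V,E) in which B is convex (if b ≺ v ≺ b' with b,b' ∈ B then v ∈ B). -/
open Set

variable {V : Type*}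

/-!
Collapse `B` to the single vertex `b₀` and compare vertices by `r₀` on their images; ties, which
occur only inside `B`, are broken by `r₀` itself. This is the relation `r` of the theorem, i.e. the
order `r₀` restricted to `B` substituted for the point `b₀`. Every vertex outside `B` is adjacent to all
of `B` or to none of it, so collapsing `B` does not change adjacency between vertices on different
sides, and `r` stays associated to `E`. A vertex `v ∉ B` strictly between two vertices of `B` would
give `r₀ b₀ v` and `r₀ v b₀`, contradicting irreflexivity.
-/

theorem IsAssociated.adj_symm {E r : V → V → Prop} (h : IsAssociated E r) :
    ∀ u v, E u v → E v u := fun u v huv =>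
  not_not.mp fun hvu => (h.2.2 u v).mpr ((h.2.2 v u).mp hvu).symm huv

theorem Buried.adj_iff_of_not_mem {E : V → V → Prop} {B : Set V} (hB : Buried E B)
    (hE : ∀ u v, E u v → E v u) {v b b' : V} (hv : v ∉ B) (hb : b ∈ B) (hb' : b' ∈ B) :
    E b v ↔ E b' v := by
  by_cases hK : v ∈ Kset E B
  · exact iff_of_true (hE _ _ (hK b hb)) (hE _ _ (hK b' hb'))
  · have hR : v ∈ Rset E B := ⟨hv, hK⟩
    exact iff_of_false (hB.2.2.2 b hb v hR) (hB.2.2.2 b' hb' v hR)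

section Collapse

variable {E r₀ : V → V → Prop} {B : Set V} {b₀ u v : V}

open scoped Classical in
noncomputable def collapseTo (B : Set V) (b₀ v : V) : V := if v ∈ B then b₀ else v

theorem collapseTo_of_mem (hv : v ∈ B) : collapseTo B b₀ v = b₀ := by
  simp [collapseTo, hv]

theorem collapseTo_of_not_mem (hv : v ∉ B) : collapseTo B b₀ v = v := by
  simp [collapseTo, hv]

theorem collapseTo_eq_of_mem (hu : u ∈ B) (hv : v ∈ B) :
    collapseTo B b₀ u = collapseTo B b₀ v := by
  rw [collapseTo_of_mem hu, collapseTo_of_mem hv]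

def collapseOrder (r₀ : V → V → Prop) (B : Set V) (b₀ u v : V) : Prop :=
  r₀ (collapseTo B b₀ u) (collapseTo B b₀ v) ∨ (u ∈ B ∧ v ∈ B ∧ r₀ u v)

theorem collapseOrder_iff (hirr : ¬ r₀ b₀ b₀) :
    collapseOrder r₀ B b₀ u v ↔
      ((((u ∈ B ∧ v ∈ B) ∨ (u ∉ B ∧ v ∉ B)) ∧ r₀ u v) ∨
        (u ∈ B ∧ v ∉ B ∧ r₀ b₀ v) ∨ (u ∉ B ∧ v ∈ B ∧ r₀ u b₀)) := by
  by_cases hu : u ∈ B <;> by_cases hv : v ∈ B <;>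
    simp [collapseOrder, collapseTo, hu, hv, hirr]

theorem collapseOrder_iff_of_mem (hirr : ¬ r₀ b₀ b₀) (hu : u ∈ B) (hv : v ∈ B) :
    collapseOrder r₀ B b₀ u v ↔ r₀ u v := by
  simp [collapseOrder, collapseTo_of_mem hu, collapseTo_of_mem hv, hirr, hu, hv]

theorem collapseOrder_iff_of_not_both_mem (huv : ¬ (u ∈ B ∧ v ∈ B)) :
    collapseOrder r₀ B b₀ u v ↔ r₀ (collapseTo B b₀ u) (collapseTo B b₀ v) := by
  simp only [collapseOrder, or_iff_left_iff_imp]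
  exact fun ⟨hu, hv, _⟩ => (huv ⟨hu, hv⟩).elim

theorem collapseOrder_irrefl (hirr : ∀ v, ¬ r₀ v v) : ¬ collapseOrder r₀ B b₀ v v :=
  fun h => h.elim (hirr _) fun ⟨_, _, h⟩ => hirr v h

theorem collapseOrder_trans (htrans : ∀ a b c, r₀ a b → r₀ b c → r₀ a c) {a b c : V}
    (hab : collapseOrder r₀ B b₀ a b) (hbc : collapseOrder r₀ B b₀ b c) :
    collapseOrder r₀ B b₀ a c := by
  rcases hab with hab | ⟨ha, hb, hab⟩ <;> rcases hbc with hbc | ⟨hb', hc, hbc⟩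
  · exact .inl (htrans _ _ _ hab hbc)
  · exact .inl (collapseTo_eq_of_mem hb' hc ▸ hab)
  · exact .inl (collapseTo_eq_of_mem hb ha ▸ hbc)
  · exact .inr ⟨ha, hc, htrans _ _ _ hab hbc⟩

theorem adj_collapseTo_iff (hE : ∀ u v, E u v → E v u) (hmod : ∀ v ∉ B, ∀ b ∈ B, E b v ↔ E b₀ v)
    (huv : ¬ (u ∈ B ∧ v ∈ B)) : E (collapseTo B b₀ u) (collapseTo B b₀ v) ↔ E u v := by
  by_cases hu : u ∈ B
  · have hv : v ∉ B := fun hv => huv ⟨hu, hv⟩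
    rw [collapseTo_of_mem hu, collapseTo_of_not_mem hv, hmod v hv u hu]
  · by_cases hv : v ∈ B
    · have hcomm : ∀ x y, E x y ↔ E y x := fun x y => ⟨hE x y, hE y x⟩
      rw [collapseTo_of_not_mem hu, collapseTo_of_mem hv, hcomm u, hcomm u, hmod u hu v hv]
    · rw [collapseTo_of_not_mem hu, collapseTo_of_not_mem hv]

theorem IsAssociated.collapseOrder (h : IsAssociated E r₀)
    (hmod : ∀ v ∉ B, ∀ b ∈ B, E b v ↔ E b₀ v) : IsAssociated E (collapseOrder r₀ B b₀) := by
  have hE := h.adj_symm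
  obtain ⟨hirr, htrans, hcomp⟩ := h
  refine ⟨fun v => collapseOrder_irrefl hirr, fun a b c => collapseOrder_trans htrans,
    fun u v => ?_⟩
  by_cases huv : u ∈ B ∧ v ∈ B
  · rw [collapseOrder_iff_of_mem (hirr b₀) huv.1 huv.2,
      collapseOrder_iff_of_mem (hirr b₀) huv.2 huv.1, hcomp]
  · rw [collapseOrder_iff_of_not_both_mem huv,
      collapseOrder_iff_of_not_both_mem (huv ∘ And.symm),
      ← adj_collapseTo_iff hE hmod huv, hcomp]

theorem mem_of_collapseOrder_of_collapseOrder (hirr : ∀ v, ¬ r₀ v v)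
    (htrans : ∀ a b c, r₀ a b → r₀ b c → r₀ a c) {b b' : V} (hb : b ∈ B) (hb' : b' ∈ B)
    (h₁ : collapseOrder r₀ B b₀ b v) (h₂ : collapseOrder r₀ B b₀ v b') : v ∈ B := by
  by_contra hv
  rw [collapseOrder_iff_of_not_both_mem (hv ∘ And.right)] at h₁
  rw [collapseOrder_iff_of_not_both_mem (hv ∘ And.left)] at h₂
  have h := htrans _ _ _ h₁ h₂
  rw [collapseTo_of_mem hb, collapseTo_of_mem hb'] at h
  exact hirr b₀ h

end Collapse

theorem stmt10_general {V : Type*} (E : V → V → Prop) (B : Set V) (hB : Buried E B)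
    (r₀ : V → V → Prop) (hr₀ : IsAssociated E r₀) (b₀ : V) (hb₀ : b₀ ∈ B)
    (r : V → V → Prop)
    (hr : ∀ u v, r u v ↔
      ((((u ∈ B ∧ v ∈ B) ∨ (u ∉ B ∧ v ∉ B)) ∧ r₀ u v) ∨
        (u ∈ B ∧ v ∉ B ∧ r₀ b₀ v) ∨ (u ∉ B ∧ v ∈ B ∧ r₀ u b₀))) :
    IsAssociated E r ∧
      ∀ b v b', b ∈ B → b' ∈ B → r b v → r v b' → v ∈ B := by
  obtain rfl : r = collapseOrder r₀ B b₀ :=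
    funext₂ fun u v => propext ((hr u v).trans (collapseOrder_iff (hr₀.1 b₀)).symm)
  have hmod : ∀ v ∉ B, ∀ b ∈ B, E b v ↔ E b₀ v :=
    fun v hv b hb => hB.adj_iff_of_not_mem hr₀.adj_symm hv hb hb₀
  exact ⟨hr₀.collapseOrder hmod, fun b v b' hb hb' =>
    mem_of_collapseOrder_of_collapseOrder hr₀.1 hr₀.2.1 hb hb'⟩

theorem stmt10 {V : Type*} (E : V → V → Prop) (hrefl : ∀ v, E v v)
    (hsymm : ∀ u v, E u v → E v u) (B : Set V) (hB : Buried E B)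
    (r₀ : V → V → Prop) (hr₀ : IsAssociated E r₀) (b₀ : V) (hb₀ : b₀ ∈ B)
    (r : V → V → Prop)
    (hr : ∀ u v, r u v ↔
      ((((u ∈ B ∧ v ∈ B) ∨ (u ∉ B ∧ v ∉ B)) ∧ r₀ u v) ∨
        (u ∈ B ∧ v ∉ B ∧ r₀ b₀ v) ∨ (u ∉ B ∧ v ∈ B ∧ r₀ u b₀))) :
    IsAssociated E r ∧
      ∀ b v b', b ∈ B → b' ∈ B → r b v → r v b' → v ∈ B :=
  stmt10_general E B hB r₀ hr₀ b₀ hb₀ r hr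
end

section
/- Let (V,E) be a connected interval graph and v,u ∈ V with ¬(v E u). Define B₀(v,u) = {v,u} and B_{n+1}(v,u) = {w ∈ V : ∃ z,z' ∈ B_n(v,u), z E w ∧ ¬(z' E w)}, and B(v,u) = ∪_n B_n(v,u). Then B_n(v,u) ⊆ B_{n+1}(v,u) for all n, and B(v,u) is a buried subgraph if and only if R(B(v,u)) = V \ (B(v,u) ∪ K(B(v,u))) is nonempty. -/
open Set

variable {V : Type*}

/-!
Reflexivity puts each `B_n` into `B_{n+1}` (take `z = w`), so `B(v,u)` is closed under the rule
producing `B_{n+1}`. Every vertex of `B(v,u)` has a non-neighbour in `B(v,u)`, hence lies outside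
`K(B(v,u))`; and a vertex of `R(B(v,u))` has a non-neighbour in `B(v,u)` by definition of `R`, so
if it were adjacent to a vertex of `B(v,u)`, closure would put it into `B(v,u)`.
-/

section

variable {E : V → V → Prop} {v u : V}

theorem Bfam_subset_succ (hrefl : ∀ w, E w w) (hsymm : ∀ a b, E a b → E b a) (hvu : ¬ E v u)
    (n : ℕ) :
    Bfam E v u n ⊆ Bfam E v u (n + 1) := by
  induction n with
  | zero =>
    rintro w (rfl | rfl)
    · exact ⟨w, .inl rfl, u, .inr rfl, hrefl w, fun h => hvu (hsymm _ _ h)⟩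
    · exact ⟨w, .inr rfl, v, .inl rfl, hrefl w, hvu⟩
  | succ n ih =>
    rintro w ⟨z, hz, z', hz', hzw, hz'w⟩
    exact ⟨z, ih hz, z', ih hz', hzw, hz'w⟩

theorem left_mem_Bset : v ∈ Bset E v u := mem_iUnion.2 ⟨0, .inl rfl⟩

theorem right_mem_Bset : u ∈ Bset E v u := mem_iUnion.2 ⟨0, .inr rfl⟩

theorem mem_Bset_of_adj_of_not_adj (hrefl : ∀ w, E w w) (hsymm : ∀ a b, E a b → E b a)
    (hvu : ¬ E v u) {z z' w : V} (hz : z ∈ Bset E v u) (hz' : z' ∈ Bset E v u) (hzw : E z w)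
    (hz'w : ¬ E z' w) :
    w ∈ Bset E v u := by
  have hmono : Monotone (Bfam E v u) :=
    monotone_nat_of_le_succ (Bfam_subset_succ hrefl hsymm hvu)
  obtain ⟨n, hn⟩ := mem_iUnion.1 hz
  obtain ⟨m, hm⟩ := mem_iUnion.1 hz'
  exact mem_iUnion.2 ⟨max n m + 1,
    z, hmono (le_max_left n m) hn, z', hmono (le_max_right n m) hm, hzw, hz'w⟩

theorem notMem_Kset_of_mem_Bset (hsymm : ∀ a b, E a b → E b a) (hvu : ¬ E v u) {b : V}
    (hb : b ∈ Bset E v u) :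
    b ∉ Kset E (Bset E v u) := by
  intro hK
  obtain ⟨n, hn⟩ := mem_iUnion.1 hb
  cases n with
  | zero =>
    rcases hn with rfl | rfl
    · exact hvu (hK u right_mem_Bset)
    · exact hvu (hsymm _ _ (hK v left_mem_Bset))
  | succ n =>
    obtain ⟨-, -, z', hz', -, hz'b⟩ := hn
    exact hz'b (hsymm _ _ (hK z' (mem_iUnion.2 ⟨n, hz'⟩)))

theorem not_adj_of_mem_Bset_of_mem_Rset (hrefl : ∀ w, E w w) (hsymm : ∀ a b, E a b → E b a)
    (hvu : ¬ E v u) {b r : V} (hb : b ∈ Bset E v u) (hr : r ∈ Rset E (Bset E v u)) :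
    ¬ E b r := by
  intro hbr
  obtain ⟨hrB, hrK⟩ := hr
  obtain ⟨b', hb', hrb'⟩ : ∃ b' ∈ Bset E v u, ¬ E r b' := by
    simpa only [Kset, mem_ofPred_eq, not_forall, exists_prop] using hrK
  exact hrB <| mem_Bset_of_adj_of_not_adj hrefl hsymm hvu hb hb' hbr fun h => hrb' (hsymm _ _ h)

end

theorem stmt12_general {V : Type*} (E : V → V → Prop) (hIG : IsIntervalGraph E)
    (v u : V) (hvu : ¬ E v u) :
    (∀ n, Bfam E v u n ⊆ Bfam E v u (n + 1)) ∧
      (Buried E (Bset E v u) ↔ (Rset E (Bset E v u)).Nonempty) := by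
  obtain ⟨hrefl, hsymm, -⟩ := hIG
  refine ⟨Bfam_subset_succ hrefl hsymm hvu, fun h => h.2.2.1, fun hR => ?_⟩
  exact ⟨⟨v, left_mem_Bset, u, right_mem_Bset, hvu⟩,
    fun _ => notMem_Kset_of_mem_Bset hsymm hvu, hR,
    fun _ hb _ => not_adj_of_mem_Bset_of_mem_Rset hrefl hsymm hvu hb⟩

theorem stmt12 {V : Type*} (E : V → V → Prop) (hIG : IsIntervalGraph E)
    (hconn : Connected E) (v u : V) (hvu : ¬ E v u) :
    (∀ n, Bfam E v u n ⊆ Bfam E v u (n + 1)) ∧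
      (Buried E (Bset E v u) ↔ (Rset E (Bset E v u)).Nonempty) :=
  stmt12_general E hIG v u hvu
end

section
/- Let (V,E) be a connected interval graph with representation (L,<,f_L,f_R), and v,u ∈ V with ¬(v E u) and F(v) < F(u). Define B_n(v,u) and B(v,u) as in the standard construction, and for w ∈ B(v,u) let e_w be the least n with w ∈ B_n(v,u). If x,y ∈ B(v,u) satisfy F(u) < F(x) and f_L(x) ≤ f_L(y), then e_x ≤ e_y. -/
open Set

variable {V : Type*}

/-!
Induction on `n` shows that if `w ∈ B_n(v,u)` and `x` lies to the right of `u` with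
`f_L(x) ≤ f_L(w)`, then `x ∈ B_m(v,u)` for some `m ≤ n`. Neither endpoint of the base pair
can play the role of `w`. If `w` enters `B_{n+1}` through a neighbour `z ∈ B_n`, either `z` also
meets `x`, and then `z` and `u` (which misses `x`) put `x` into `B_{n+1}`; or the interval of `x`
lies left of that of `z`, and the induction hypothesis applies to `z`.
-/

section Bfam

variable {E : V → V → Prop} {v u w : V}

theorem endpoints_mem_Bfam (hv : E v v) (hu : E u u) (hvu : ¬ E v u) (huv : ¬ E u v) (n : ℕ) :
    v ∈ Bfam E v u n ∧ u ∈ Bfam E v u n := by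
  induction n with
  | zero => exact ⟨Or.inl rfl, Or.inr rfl⟩
  | succ n ih => exact ⟨⟨v, ih.1, u, ih.2, hv, huv⟩, ⟨u, ih.2, v, ih.1, hu, hvu⟩⟩

theorem eLevel_le_of_mem_Bfam {n : ℕ} (hw : w ∈ Bfam E v u n) : eLevel E v u w ≤ n :=
  Nat.sInf_le hw

theorem mem_Bfam_eLevel (hw : w ∈ Bset E v u) : w ∈ Bfam E v u (eLevel E v u w) :=
  Nat.sInf_mem (mem_iUnion.1 hw)

end Bfam

namespace IsIntervalRep

variable {L : Type} [LinearOrder L] {E : V → V → Prop} {fL fR : V → L}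

theorem adj_refl (hrep : IsIntervalRep E fL fR) (w : V) : E w w :=
  (hrep.2 w w).2 ⟨hrep.1 w, hrep.1 w⟩

theorem not_adj_of_fR_lt_fL (hrep : IsIntervalRep E fL fR) {a b : V} (h : fR a < fL b) :
    ¬ E a b ∧ ¬ E b a :=
  ⟨fun hab => ((hrep.2 a b).1 hab).2.not_gt h, fun hba => ((hrep.2 b a).1 hba).1.not_gt h⟩

theorem fR_lt_fL_of_not_adj (hrep : IsIntervalRep E fL fR) {a b : V} (hba : ¬ E b a)
    (h : fL a ≤ fR b) : fR a < fL b := by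
  by_contra hab
  exact hba ((hrep.2 b a).2 ⟨not_lt.1 hab, h⟩)

theorem eLevel_le_of_fL_le (hrep : IsIntervalRep E fL fR) {v u x : V} (hord : fR v < fL u)
    (hux : fR u < fL x) {n : ℕ} :
    ∀ w ∈ Bfam E v u n, fL x ≤ fL w → eLevel E v u x ≤ n := by
  have hendpoints := endpoints_mem_Bfam (hrep.adj_refl v) (hrep.adj_refl u)
    (hrep.not_adj_of_fR_lt_fL hord).1 (hrep.not_adj_of_fR_lt_fL hord).2
  induction n with
  | zero =>
    rintro w (rfl | rfl) hxw
    · exact absurd (hxw.trans (hrep.1 w)) (hord.trans_le ((hrep.1 u).trans_lt hux).le).not_ge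
    · exact absurd (hxw.trans (hrep.1 w)) hux.not_ge
  | succ n ih =>
    rintro w ⟨z, hz, -, -, hzw, -⟩ hxw
    by_cases hzx : E z x
    · exact eLevel_le_of_mem_Bfam
        ⟨z, hz, u, (hendpoints n).2, hzx, (hrep.not_adj_of_fR_lt_fL hux).1⟩
    · have hxz : fR x < fL z :=
        hrep.fR_lt_fL_of_not_adj hzx (hxw.trans ((hrep.2 z w).1 hzw).2)
      exact (ih z hz ((hrep.1 x).trans hxz.le)).trans n.le_succ

end IsIntervalRep

theorem stmt13_general {V : Type*} {L : Type} [LinearOrder L] (E : V → V → Prop)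
    (fL fR : V → L) (hrep : IsIntervalRep E fL fR)
    (v u : V) (hord : fR v < fL u)
    (x y : V) (hy : y ∈ Bset E v u)
    (hux : fR u < fL x) (hxy : fL x ≤ fL y) :
    eLevel E v u x ≤ eLevel E v u y :=
  hrep.eLevel_le_of_fL_le hord hux y (mem_Bfam_eLevel hy) hxy

theorem stmt13 {V : Type*} {L : Type} [LinearOrder L] (E : V → V → Prop)
    (hrefl : ∀ w, E w w) (hsymm : ∀ w w', E w w' → E w' w)
    (fL fR : V → L) (hrep : IsIntervalRep E fL fR) (hconn : Connected E)
    (v u : V) (hvu : ¬ E v u) (hord : fR v < fL u)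
    (x y : V) (hx : x ∈ Bset E v u) (hy : y ∈ Bset E v u)
    (hux : fR u < fL x) (hxy : fL x ≤ fL y) :
    eLevel E v u x ≤ eLevel E v u y :=
  stmt13_general E fL fR hrep v u hord x y hy hux hxy
end

section
/- Let (V,E) be a connected interval graph with representation (L,<,f_L,f_R), and v,u ∈ V with ¬(v E u) and F(v) < F(u); define B_n(v,u), B(v,u), and e_w as usual. If w ∈ B(v,u) and F(w) is not entirely before F(u) (i.e., ¬(F(w) < F(u))), then there exists a path u E b₁ E ... E b_k E w with all b_i ∈ B(v,u) and e_{b_i} < e_w. -/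
open Set

variable {V : Type*}

/-!
Induct on the level `e_w`. If `u E w` the path is `u, w`. Otherwise `w ∉ B_0 = {v, u}`
(as `F(v) < F(u)` and `u E u`), so `w` has a neighbour `z` of smaller level; since `F(u)`
does not meet `F(w)` but is not after it, `F(u) < F(w)`, and `F(z)` meets `F(w)`, so
`F(z)` is not before `F(u)` either and the induction hypothesis applies to `z`.
-/

namespace IsIntervalRep

variable {L : Type} [LinearOrder L] {E : V → V → Prop} {fL fR : V → L}

theorem adj_self (hrep : IsIntervalRep E fL fR) (a : V) : E a a :=
  (hrep.2 a a).2 ⟨hrep.1 a, hrep.1 a⟩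

theorem lt_of_not_adj (hrep : IsIntervalRep E fL fR) {a b : V} (hab : ¬ E a b)
    (h : fL a ≤ fR b) : fR a < fL b :=
  not_le.1 fun h' => hab ((hrep.2 a b).2 ⟨h, h'⟩)

end IsIntervalRep

section Paths

variable {E : V → V → Prop}

theorem IsPath.snoc {p : ℕ → V} {n : ℕ} {w : V} (hp : IsPath E p n) (hw : E (p n) w) :
    IsPath E (fun i => if i ≤ n then p i else w) (n + 1) := by
  intro i hi
  rcases Nat.lt_succ_iff_lt_or_eq.1 hi with hi | rfl
  · simpa [hi.le, Nat.succ_le_of_lt hi] using hp i hi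
  · simpa using hw

theorem exists_path_of_descent (u : V) (P : V → Prop) (S : Set V) (e : V → ℕ)
    (hstep : ∀ w, P w → ¬ E u w → ∃ z ∈ S, e z < e w ∧ E z w ∧ P z) :
    ∀ w, P w → ∃ (k : ℕ) (p : ℕ → V), p 0 = u ∧ p (k + 1) = w ∧ IsPath E p (k + 1) ∧
      ∀ i, 1 ≤ i → i ≤ k → p i ∈ S ∧ e (p i) < e w := by
  intro w
  induction h : e w using Nat.strong_induction_on generalizing w with
  | _ n ih =>
    intro hw
    subst h
    by_cases huw : E u w
    · refine ⟨0, fun i => if i = 0 then u else w, rfl, rfl, ?_, fun i hi1 hik => by omega⟩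
      intro i hi
      obtain rfl : i = 0 := by omega
      simpa using huw
    · obtain ⟨z, hzS, hzw, hEzw, hz⟩ := hstep w hw huw
      obtain ⟨k, q, hq0, hqk, hq, hqS⟩ := ih (e z) hzw z rfl hz
      refine ⟨k + 1, fun i => if i ≤ k + 1 then q i else w, by simp [hq0], by simp,
        hq.snoc (by rwa [hqk]), fun i hi1 hik => ?_⟩
      simp only [if_pos hik]
      rcases Nat.lt_succ_iff_lt_or_eq.1 (Nat.lt_succ_of_le hik) with hi | rfl
      · have := hqS i hi1 (Nat.lt_succ_iff.1 hi)
        exact ⟨this.1, this.2.trans hzw⟩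
      · exact ⟨hqk ▸ hzS, hqk ▸ hzw⟩

end Paths

theorem exists_adj_eLevel_lt {L : Type} [LinearOrder L] {E : V → V → Prop}
    {fL fR : V → L} (hrep : IsIntervalRep E fL fR) {v u : V} (hord : fR v < fL u) {w : V}
    (hw : w ∈ Bset E v u) (hwu : ¬ fR w < fL u) (huw : ¬ E u w) :
    ∃ z ∈ Bset E v u, eLevel E v u z < eLevel E v u w ∧ E z w ∧ ¬ fR z < fL u := by
  have hwB := mem_Bfam_eLevel hw
  rcases hlev : eLevel E v u w with _ | m
  · rw [hlev] at hwB
    rcases hwB with rfl | rfl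
    · exact absurd hord hwu
    · exact absurd (hrep.adj_self w) huw
  · rw [hlev] at hwB
    obtain ⟨z, hz, -, -, hzw, -⟩ := hwB
    refine ⟨z, mem_iUnion_of_mem m hz, Nat.lt_succ_of_le (eLevel_le_of_mem_Bfam hz), hzw, ?_⟩
    have hFuw : fR u < fL w := hrep.lt_of_not_adj huw (not_lt.1 hwu)
    exact not_lt.2 ((hrep.1 u).trans (hFuw.le.trans ((hrep.2 z w).1 hzw).2))

theorem stmt14_general {V : Type*} {L : Type} [LinearOrder L] (E : V → V → Prop)
    (fL fR : V → L) (hrep : IsIntervalRep E fL fR)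
    (v u : V) (hord : fR v < fL u)
    (w : V) (hw : w ∈ Bset E v u) (hwu : ¬ fR w < fL u) :
    ∃ (k : ℕ) (p : ℕ → V), p 0 = u ∧ p (k + 1) = w ∧ IsPath E p (k + 1) ∧
      ∀ i, 1 ≤ i → i ≤ k →
        p i ∈ Bset E v u ∧ eLevel E v u (p i) < eLevel E v u w :=
  exists_path_of_descent u (fun z => z ∈ Bset E v u ∧ ¬ fR z < fL u) (Bset E v u)
    (eLevel E v u) (fun _ hz huz => by
      obtain ⟨z, hzB, hlt, hzw, hzu⟩ := exists_adj_eLevel_lt hrep hord hz.1 hz.2 huz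
      exact ⟨z, hzB, hlt, hzw, hzB, hzu⟩) w ⟨hw, hwu⟩

theorem stmt14 {V : Type*} {L : Type} [LinearOrder L] (E : V → V → Prop)
    (hrefl : ∀ w, E w w) (hsymm : ∀ w w', E w w' → E w' w)
    (fL fR : V → L) (hrep : IsIntervalRep E fL fR) (hconn : Connected E)
    (v u : V) (hvu : ¬ E v u) (hord : fR v < fL u)
    (w : V) (hw : w ∈ Bset E v u) (hwu : ¬ fR w < fL u) :
    ∃ (k : ℕ) (p : ℕ → V), p 0 = u ∧ p (k + 1) = w ∧ IsPath E p (k + 1) ∧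
      ∀ i, 1 ≤ i → i ≤ k →
        p i ∈ Bset E v u ∧ eLevel E v u (p i) < eLevel E v u w :=
  stmt14_general E fL fR hrep v u hord w hw hwu
end
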